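/- arXiv:1908.10620 — 6 statements merged into one kernel-verified Lean document; each statement's English description precedes it below -/
import Mathlib

section
/- Let x ∈ [0,1]^n and let q_m denote the sum of the n − m smallest entries of x, for 0 ≤ m < k ≤ n. Then the maximum probability β with which a coupling of Bernoulli random variables X₁,…,Xₙ with marginals P(Xᵣ = 1) = xᵣ achieves ∑ᵣ Xᵣ ≥ k satisfies β ≤ min{1, min_{0 ≤ m < k} q_m/(k−m)}. -/
theorem stmt_4 (n k : ℕ) (hk : 0 < k) (hkn : k ≤ n)
    (x : Fin n → ℝ) (hx : ∀ i, 0 ≤ x i ∧ x i ≤ 1)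
    (q : ℕ → ℝ)
    (hq : ∀ m < k, IsLeast
      {v | ∃ T : Finset (Fin n), T.card = n - m ∧ v = ∑ i ∈ T, x i} (q m))
    (μ : (Fin n → Bool) → ℝ) (hμ0 : ∀ s, 0 ≤ μ s) (hμ1 : ∑ s, μ s = 1)
    (hmarg : ∀ r, ∑ s ∈ Finset.univ.filter (fun s => s r = true), μ s = x r)
    (β : ℝ)
    (hβ : β = ∑ s ∈ Finset.univ.filter
      (fun s : Fin n → Bool => k ≤ (Finset.univ.filter (fun r => s r = true)).card), μ s) :
    β ≤ 1 ∧ ∀ m < k, β ≤ q m / ((k : ℝ) - m) := by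
  constructor
  · rw [hβ, ← hμ1]
    exact Finset.sum_le_sum_of_subset_of_nonneg (Finset.filter_subset _ _)
      (fun s _ _ => hμ0 s)
  · intro m hm
    obtain ⟨⟨T, hTcard, hqT⟩, _⟩ := hq m hm
    have hmn : m ≤ n := le_trans (le_of_lt hm) hkn
    have hkm : (0:ℝ) < (k:ℝ) - m := by
      have : (m:ℝ) < k := by exact_mod_cast hm
      linarith
    rw [le_div_iff₀ hkm]
    have h1 : ∑ i ∈ T, x i
        = ∑ s : Fin n → Bool, ((T.filter (fun i => s i = true)).card : ℝ) * μ s := by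
      simp only [← hmarg, Finset.sum_filter]
      rw [Finset.sum_comm]
      refine Finset.sum_congr rfl fun s _ => ?_
      rw [← Finset.sum_filter, Finset.sum_const, nsmul_eq_mul]
    have hcard : ∀ s : Fin n → Bool,
        k ≤ (Finset.univ.filter (fun r => s r = true)).card →
        (k:ℝ) - m ≤ ((T.filter (fun i => s i = true)).card : ℝ) := by
      intro s hs
      have hsub : Finset.univ.filter (fun r => s r = true)
          ⊆ T.filter (fun i => s i = true) ∪ (Finset.univ \ T) := by
        intro r hr
        simp only [Finset.mem_filter, Finset.mem_univ, true_and] at hr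
        by_cases hrT : r ∈ T
        · exact Finset.mem_union_left _ (Finset.mem_filter.mpr ⟨hrT, hr⟩)
        · exact Finset.mem_union_right _ (Finset.mem_sdiff.mpr ⟨Finset.mem_univ r, hrT⟩)
      have hc : (Finset.univ \ T).card = m := by
        rw [Finset.card_sdiff_of_subset (Finset.subset_univ T), Finset.card_univ, Fintype.card_fin,
          hTcard, Nat.sub_sub_self hmn]
      have := le_trans hs (le_trans (Finset.card_le_card hsub) (Finset.card_union_le _ _))
      rw [hc] at this
      have : (k:ℝ) ≤ ((T.filter (fun i => s i = true)).card : ℝ) + m := by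
        exact_mod_cast this
      linarith
    calc β * ((k:ℝ) - m)
        = ∑ s ∈ Finset.univ.filter
            (fun s : Fin n → Bool => k ≤ (Finset.univ.filter (fun r => s r = true)).card),
            ((k:ℝ) - m) * μ s := by
          rw [hβ, Finset.sum_mul]
          exact Finset.sum_congr rfl fun s _ => mul_comm _ _
      _ ≤ ∑ s ∈ Finset.univ.filter
            (fun s : Fin n → Bool => k ≤ (Finset.univ.filter (fun r => s r = true)).card),
            ((T.filter (fun i => s i = true)).card : ℝ) * μ s := by
          refine Finset.sum_le_sum fun s hs => ?_
          have := hcard s (Finset.mem_filter.mp hs).2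
          exact mul_le_mul_of_nonneg_right this (hμ0 s)
      _ ≤ ∑ s : Fin n → Bool, ((T.filter (fun i => s i = true)).card : ℝ) * μ s := by
          refine Finset.sum_le_sum_of_subset_of_nonneg (Finset.filter_subset _ _)
            fun s _ _ => mul_nonneg (Nat.cast_nonneg _) (hμ0 s)
      _ = ∑ i ∈ T, x i := h1.symm
      _ = q m := hqT.symm
end

section
/- Let x ∈ ℝ^n and w ∈ {0,…,n}. Then the sum of the w smallest entries of x equals max over t ∈ ℝ and z ∈ ℝ₋^n of (w·t + ∑ᵢ zᵢ) subject to xᵢ ≥ t + zᵢ for all i (LP-duality characterization). -/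
/-!
Weak duality: summing the constraints `t + zᵢ ≤ xᵢ` over any `w`-set `T` and using `zᵢ ≤ 0` off `T`
bounds every dual value by `∑_{i ∈ T} xᵢ`. Conversely, by an exchange argument a minimizing `T`
consists of smallest entries, so some threshold `t` separates the values on `T` from the others,
and `zᵢ = min (xᵢ - t) 0` attains the bound.
-/

open Finset

variable {ι M : Type*}

theorem le_of_mem_of_notMem_of_sum_le [DecidableEq ι] [AddCommGroup M] [LinearOrder M]
    [IsOrderedAddMonoid M] {x : ι → M} {T : Finset ι}
    (hmin : ∀ S : Finset ι, S.card = T.card → ∑ i ∈ T, x i ≤ ∑ i ∈ S, x i) :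
    ∀ i ∈ T, ∀ j ∉ T, x i ≤ x j := by
  intro i hi j hj
  have hj' : j ∉ T.erase i := fun h ↦ hj (mem_of_mem_erase h)
  have hcard : (insert j (T.erase i)).card = T.card := by
    rw [card_insert_of_notMem hj', card_erase_add_one hi]
  have := hmin _ hcard
  rw [sum_insert hj', sum_erase_eq_sub hi] at this
  rwa [add_sub_left_comm, le_add_iff_nonneg_right, sub_nonneg] at this

variable [Fintype ι]

theorem exists_separating_threshold [LinearOrder M] [Nonempty M] (x : ι → M) (T : Finset ι)
    (hsep : ∀ i ∈ T, ∀ j ∉ T, x i ≤ x j) :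
    ∃ t, (∀ i ∈ T, x i ≤ t) ∧ ∀ j ∉ T, t ≤ x j := by
  by_cases hT : T.Nonempty
  · obtain ⟨i, hi, hmax⟩ := T.exists_max_image x hT
    exact ⟨x i, hmax, hsep i hi⟩
  · rw [not_nonempty_iff_eq_empty] at hT
    subst hT
    by_cases hι : (univ : Finset ι).Nonempty
    · obtain ⟨j, -, hmin⟩ := univ.exists_min_image x hι
      exact ⟨x j, by simp, fun k _ ↦ hmin k (mem_univ k)⟩
    · obtain ⟨t⟩ := ‹Nonempty M›
      exact ⟨t, by simp, fun j _ ↦ absurd ⟨j, mem_univ j⟩ hι⟩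

variable [DecidableEq ι] [AddCommGroup M]

theorem card_nsmul_add_sum_le_sum [PartialOrder M] [IsOrderedAddMonoid M] (T : Finset ι)
    {x z : ι → M} {t : M} (hz : ∀ i, z i ≤ 0) (hxt : ∀ i, t + z i ≤ x i) :
    T.card • t + ∑ i, z i ≤ ∑ i ∈ T, x i :=
  calc T.card • t + ∑ i, z i
      = ∑ i ∈ T, (t + z i) + ∑ i ∈ Tᶜ, z i := by
        rw [← sum_add_sum_compl T z, sum_add_distrib, sum_const, add_assoc]
    _ ≤ ∑ i ∈ T, x i + 0 :=
        add_le_add (sum_le_sum fun i _ ↦ hxt i) (sum_nonpos fun i _ ↦ hz i)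
    _ = ∑ i ∈ T, x i := add_zero _

theorem card_nsmul_add_sum_min_sub_eq_sum [LinearOrder M] [IsOrderedAddMonoid M] (x : ι → M)
    (T : Finset ι) {t : M} (hT : ∀ i ∈ T, x i ≤ t) (hTc : ∀ j ∉ T, t ≤ x j) :
    T.card • t + ∑ i, min (x i - t) 0 = ∑ i ∈ T, x i := by
  have hin : ∑ i ∈ T, min (x i - t) 0 = ∑ i ∈ T, (x i - t) :=
    sum_congr rfl fun i hi ↦ min_eq_left (sub_nonpos.mpr (hT i hi))
  have hout : ∑ i ∈ Tᶜ, min (x i - t) 0 = 0 :=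
    sum_eq_zero fun j hj ↦ min_eq_right (sub_nonneg.mpr (hTc j (mem_compl.mp hj)))
  rw [← sum_add_sum_compl T, hin, hout, add_zero, sum_sub_distrib, sum_const]
  abel

theorem stmt_6_general (n w : ℕ) (x : Fin n → ℝ) (s : ℝ)
    (hs : IsLeast {v | ∃ T : Finset (Fin n), T.card = w ∧ v = ∑ i ∈ T, x i} s) :
    IsGreatest {v | ∃ (t : ℝ) (z : Fin n → ℝ), (∀ i, z i ≤ 0) ∧
      (∀ i, t + z i ≤ x i) ∧ v = w * t + ∑ i, z i} s := by
  obtain ⟨⟨T, rfl, rfl⟩, hmin⟩ := hs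
  obtain ⟨t, hT, hTc⟩ := exists_separating_threshold x T
    (le_of_mem_of_notMem_of_sum_le fun S hS ↦ hmin ⟨S, hS, rfl⟩)
  refine ⟨⟨t, fun i ↦ min (x i - t) 0, fun i ↦ min_le_right _ _,
    fun i ↦ by linarith [min_le_left (x i - t) 0], ?_⟩, ?_⟩
  · rw [← nsmul_eq_mul, card_nsmul_add_sum_min_sub_eq_sum x T hT hTc]
  · rintro v ⟨t, z, hz, hxt, rfl⟩
    rw [← nsmul_eq_mul]
    exact card_nsmul_add_sum_le_sum T hz hxt

theorem stmt_6 (n w : ℕ) (hw : w ≤ n) (x : Fin n → ℝ) (s : ℝ)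
    (hs : IsLeast {v | ∃ T : Finset (Fin n), T.card = w ∧ v = ∑ i ∈ T, x i} s) :
    IsGreatest {v | ∃ (t : ℝ) (z : Fin n → ℝ), (∀ i, z i ≤ 0) ∧
      (∀ i, t + z i ≤ x i) ∧ v = w * t + ∑ i, z i} s :=
  stmt_6_general n w x s hs
end

section
/- There always exists an optimal persuasive private signaling scheme for the k-voting problem in which, for every receiver r and state θ, the marginal probability φ_r(θ, c) is positive only if c = c₀ or c maximizes u_r(θ, ·) over C. -/
open Finset

private lemma sum_fiber_mul {α β : Type*} [Fintype α] [Fintype β] [DecidableEq β]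
    (g : α → β) (ψ : α → ℝ) (F : β → ℝ) :
    ∑ y, (∑ x ∈ univ.filter (fun x => g x = y), ψ x) * F y = ∑ x, ψ x * F (g x) := by
  rw [← Finset.sum_fiberwise univ g (fun x => ψ x * F (g x))]
  refine Finset.sum_congr rfl fun y _ => ?_
  rw [Finset.sum_mul]
  exact Finset.sum_congr rfl fun x hx => by rw [(Finset.mem_filter.mp hx).2]

private lemma sum_fiber_filter {α β : Type*} [Fintype α] [Fintype β] [DecidableEq β]
    (g : α → β) (ψ : α → ℝ) (p : β → Prop) [DecidablePred p] :
    ∑ y ∈ univ.filter p, (∑ x ∈ univ.filter (fun x => g x = y), ψ x)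
      = ∑ x ∈ univ.filter (fun x => p (g x)), ψ x := by
  rw [Finset.sum_filter, Finset.sum_filter]
  have := sum_fiber_mul g ψ (fun y => if p y then (1:ℝ) else 0)
  simpa [mul_ite, mul_one, mul_zero, ite_mul, zero_mul, one_mul] using this

private lemma ite_split {P Q : Prop} [Decidable P] [Decidable Q] (h : Q → P) (X : ℝ) :
    (if P then X else 0) = (if Q then X else 0) + (if ¬Q ∧ P then X else 0) := by
  by_cases hQ : Q
  · simp [hQ, h hQ]
  · simp [hQ]

theorem stmt_8 {Θ R C : Type*} [Fintype Θ] [Fintype R] [Fintype C]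
    [DecidableEq R] [DecidableEq C]
    (μ : Θ → ℝ) (hμ : ∀ θ, 0 < μ θ) (hμ1 : ∑ θ, μ θ = 1)
    (u : R → Θ → C → ℝ) (c₀ : C) (k : ℕ) :
    ∃ φ : Θ → (R → C) → ℝ,
      (∀ θ s, 0 ≤ φ θ s) ∧ (∀ θ, ∑ s, φ θ s = 1) ∧
      (∀ (r : R) (c c' : C),
        0 ≤ ∑ θ, ∑ s ∈ Finset.univ.filter (fun s : R → C => s r = c),
          μ θ * φ θ s * (u r θ c - u r θ c')) ∧
      (∀ φ' : Θ → (R → C) → ℝ,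
        (∀ θ s, 0 ≤ φ' θ s) → (∀ θ, ∑ s, φ' θ s = 1) →
        (∀ (r : R) (c c' : C),
          0 ≤ ∑ θ, ∑ s ∈ Finset.univ.filter (fun s : R → C => s r = c),
            μ θ * φ' θ s * (u r θ c - u r θ c')) →
        (∑ θ, ∑ s, μ θ * φ' θ s *
            (if k ≤ (Finset.univ.filter (fun r => s r = c₀)).card then (1 : ℝ) else 0)) ≤
          ∑ θ, ∑ s, μ θ * φ θ s *
            (if k ≤ (Finset.univ.filter (fun r => s r = c₀)).card then (1 : ℝ) else 0)) ∧
      (∀ (r : R) (θ : Θ) (c : C),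
        0 < ∑ s ∈ Finset.univ.filter (fun s : R → C => s r = c), φ θ s →
        c = c₀ ∨ ∀ c', u r θ c' ≤ u r θ c) := by
  classical
  -- choose best responses
  have hbex : ∀ (r : R) (θ : Θ), ∃ c : C, ∀ c', u r θ c' ≤ u r θ c := by
    intro r θ
    obtain ⟨c, -, hc⟩ := Finset.exists_max_image Finset.univ (u r θ) ⟨c₀, Finset.mem_univ _⟩
    exact ⟨c, fun c' => hc c' (Finset.mem_univ _)⟩
  choose b hb using hbex
  -- the redirection map and objective weight
  set g : Θ → (R → C) → (R → C) := fun θ s r => if s r = c₀ then c₀ else b r θ with hg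
  set f : (R → C) → ℝ :=
    fun s => if k ≤ (Finset.univ.filter (fun r => s r = c₀)).card then (1:ℝ) else 0 with hf
  have hg0 : ∀ θ (s : R → C) r, s r = c₀ → g θ s r = c₀ := by
    intro θ s r h; simp [hg, h]
  have hgval : ∀ θ (s : R → C) r, s r ≠ c₀ → g θ s r = b r θ := by
    intro θ s r h; simp [hg, h]
  have hgmem : ∀ θ (s : R → C) r, g θ s r = c₀ ∨ g θ s r = b r θ := by
    intro θ s r
    by_cases h : s r = c₀
    · exact Or.inl (hg0 θ s r h)
    · exact Or.inr (hgval θ s r h)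
  have hf01 : ∀ s, 0 ≤ f s ∧ f s ≤ 1 := by
    intro s; simp only [hf]; split_ifs <;> norm_num
  have hfmono : ∀ θ (s : R → C), f s ≤ f (g θ s) := by
    intro θ s
    have hsub : (Finset.univ.filter (fun r => s r = c₀))
        ⊆ (Finset.univ.filter fun r => g θ s r = c₀) := by
      intro r hr
      simp only [Finset.mem_filter, Finset.mem_univ, true_and] at hr ⊢
      exact hg0 θ s r hr
    have hcard := Finset.card_le_card hsub
    simp only [hf]
    split_ifs with h1 h2
    · exact le_rfl
    · exact absurd (h1.trans hcard) h2
    · norm_num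
    · exact le_rfl
  -- the transformation
  set T : (Θ → (R → C) → ℝ) → (Θ → (R → C) → ℝ) :=
    fun ψ θ s' => ∑ s ∈ Finset.univ.filter (fun s => g θ s = s'), ψ θ s with hT
  -- the feasible set with the support restriction
  set K : Set (Θ → (R → C) → ℝ) :=
    {ψ | (∀ θ s, 0 ≤ ψ θ s) ∧ (∀ θ, ∑ s, ψ θ s = 1) ∧
      (∀ (r : R) (c c' : C),
        0 ≤ ∑ θ, ∑ s ∈ Finset.univ.filter (fun s : R → C => s r = c),
          μ θ * ψ θ s * (u r θ c - u r θ c')) ∧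
      (∀ (r : R) (θ : Θ) (c : C), c ≠ c₀ → ¬ (∀ c', u r θ c' ≤ u r θ c) →
        ∑ s ∈ Finset.univ.filter (fun s : R → C => s r = c), ψ θ s = 0)} with hK
  -- T maps feasible schemes into K and weakly improves the objective
  have hTprop : ∀ ψ : Θ → (R → C) → ℝ, (∀ θ s, 0 ≤ ψ θ s) → (∀ θ, ∑ s, ψ θ s = 1) →
      (∀ (r : R) (c c' : C),
        0 ≤ ∑ θ, ∑ s ∈ Finset.univ.filter (fun s : R → C => s r = c),
          μ θ * ψ θ s * (u r θ c - u r θ c')) →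
      T ψ ∈ K ∧
      (∑ θ, ∑ s, μ θ * ψ θ s * f s) ≤ ∑ θ, ∑ s, μ θ * T ψ θ s * f s := by
    intro ψ h0 h1 h3
    refine ⟨⟨?_, ?_, ?_, ?_⟩, ?_⟩
    · -- nonneg
      intro θ s'
      simp only [hT]
      exact Finset.sum_nonneg fun s _ => h0 θ s
    · -- normalization
      intro θ
      simp only [hT]
      calc ∑ s', ∑ s ∈ Finset.univ.filter (fun s => g θ s = s'), ψ θ s
          = ∑ s', (∑ s ∈ Finset.univ.filter (fun s => g θ s = s'), ψ θ s) * 1 := by simp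
        _ = ∑ s, ψ θ s * 1 := sum_fiber_mul (g θ) (ψ θ) (fun _ => 1)
        _ = 1 := by simpa using h1 θ
    · -- persuasiveness
      intro r c c'
      have hinner : ∀ θ, (∑ s' ∈ Finset.univ.filter (fun s' : R → C => s' r = c),
            μ θ * T ψ θ s' * (u r θ c - u r θ c'))
          = ∑ s ∈ Finset.univ.filter (fun s : R → C => g θ s r = c),
            μ θ * ψ θ s * (u r θ c - u r θ c') := by
        intro θ
        simp only [hT]
        calc (∑ s' ∈ Finset.univ.filter (fun s' : R → C => s' r = c),
              μ θ * (∑ s ∈ Finset.univ.filter (fun s => g θ s = s'), ψ θ s) * (u r θ c - u r θ c'))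
            = (∑ s' ∈ Finset.univ.filter (fun s' : R → C => s' r = c),
                (∑ s ∈ Finset.univ.filter (fun s => g θ s = s'), ψ θ s))
                * (μ θ * (u r θ c - u r θ c')) := by
              rw [Finset.sum_mul]
              exact Finset.sum_congr rfl fun s' _ => by ring
          _ = (∑ s ∈ Finset.univ.filter (fun s : R → C => g θ s r = c), ψ θ s)
                * (μ θ * (u r θ c - u r θ c')) := by
              rw [sum_fiber_filter (g θ) (ψ θ) (fun s' => s' r = c)]
          _ = ∑ s ∈ Finset.univ.filter (fun s : R → C => g θ s r = c),
                μ θ * ψ θ s * (u r θ c - u r θ c') := by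
              rw [Finset.sum_mul]
              exact Finset.sum_congr rfl fun s _ => by ring
      have hrw : (∑ θ, ∑ s' ∈ Finset.univ.filter (fun s' : R → C => s' r = c),
            μ θ * T ψ θ s' * (u r θ c - u r θ c'))
          = ∑ θ, ∑ s ∈ Finset.univ.filter (fun s : R → C => g θ s r = c),
            μ θ * ψ θ s * (u r θ c - u r θ c') :=
        Finset.sum_congr rfl fun θ _ => hinner θ
      rw [hrw]
      by_cases hc : c = c₀
      · have esplit : (∑ θ, ∑ s ∈ Finset.univ.filter (fun s : R → C => g θ s r = c),
              μ θ * ψ θ s * (u r θ c - u r θ c'))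
            = (∑ θ, ∑ s ∈ Finset.univ.filter (fun s : R → C => s r = c),
                μ θ * ψ θ s * (u r θ c - u r θ c'))
              + ∑ θ, ∑ s, (if ¬ (s r = c) ∧ g θ s r = c then
                  μ θ * ψ θ s * (u r θ c - u r θ c') else 0) := by
          rw [← Finset.sum_add_distrib]
          refine Finset.sum_congr rfl fun θ _ => ?_
          rw [Finset.sum_filter, Finset.sum_filter, ← Finset.sum_add_distrib]
          refine Finset.sum_congr rfl fun s _ => ite_split ?_ _
          intro h
          rw [hc] at h ⊢
          exact hg0 θ s r h
        rw [esplit]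
        have hA := h3 r c c'
        have hB : (0:ℝ) ≤ ∑ θ, ∑ s, (if ¬ (s r = c) ∧ g θ s r = c then
            μ θ * ψ θ s * (u r θ c - u r θ c') else 0) := by
          refine Finset.sum_nonneg fun θ _ => Finset.sum_nonneg fun s _ => ?_
          split_ifs with h
          · obtain ⟨hs, hgc⟩ := h
            have hsr : s r ≠ c₀ := fun h' => hs (h' ▸ hc.symm ▸ rfl)
            have hbc : b r θ = c := by rw [← hgval θ s r hsr]; exact hgc
            have hle : u r θ c' ≤ u r θ c := hbc ▸ hb r θ c'
            exact mul_nonneg (mul_nonneg (hμ θ).le (h0 θ s)) (sub_nonneg.mpr hle)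
          · exact le_rfl
        linarith
      · refine Finset.sum_nonneg fun θ _ => Finset.sum_nonneg fun s hs => ?_
        simp only [Finset.mem_filter] at hs
        have hgc := hs.2
        have hsr : s r ≠ c₀ := fun h => hc (by rw [← hgc, hg0 θ s r h])
        have hbc : b r θ = c := by rw [← hgval θ s r hsr]; exact hgc
        have hle : u r θ c' ≤ u r θ c := hbc ▸ hb r θ c'
        exact mul_nonneg (mul_nonneg (hμ θ).le (h0 θ s)) (sub_nonneg.mpr hle)
    · -- support condition
      intro r θ c h1c h2c
      simp only [hT]
      rw [sum_fiber_filter (g θ) (ψ θ) (fun s' => s' r = c)]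
      refine Finset.sum_eq_zero fun s hs => ?_
      exfalso
      simp only [Finset.mem_filter] at hs
      rcases hgmem θ s r with h | h
      · exact h1c (by rw [← hs.2, h])
      · have hbc : c = b r θ := by rw [← hs.2, h]
        exact h2c (hbc ▸ hb r θ)
    · -- objective improves
      have key : ∀ θ, (∑ s', μ θ * T ψ θ s' * f s') = ∑ s, μ θ * ψ θ s * f (g θ s) := by
        intro θ
        simp only [hT]
        calc (∑ s', μ θ * (∑ s ∈ Finset.univ.filter (fun s => g θ s = s'), ψ θ s) * f s')
            = ∑ s', (∑ s ∈ Finset.univ.filter (fun s => g θ s = s'), ψ θ s) * (μ θ * f s') :=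
              Finset.sum_congr rfl fun s' _ => by ring
          _ = ∑ s, ψ θ s * (μ θ * f (g θ s)) := sum_fiber_mul (g θ) (ψ θ) (fun s' => μ θ * f s')
          _ = ∑ s, μ θ * ψ θ s * f (g θ s) := Finset.sum_congr rfl fun s _ => by ring
      calc (∑ θ, ∑ s, μ θ * ψ θ s * f s)
          ≤ ∑ θ, ∑ s, μ θ * ψ θ s * f (g θ s) := by
            refine Finset.sum_le_sum fun θ _ => Finset.sum_le_sum fun s _ => ?_
            exact mul_le_mul_of_nonneg_left (hfmono θ s)
              (mul_nonneg (hμ θ).le (h0 θ s))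
        _ = ∑ θ, ∑ s', μ θ * T ψ θ s' * f s' := (Finset.sum_congr rfl fun θ _ => (key θ).symm)
  -- K is nonempty
  have hKne : K.Nonempty := by
    refine ⟨fun θ s => if s = (fun r => b r θ) then (1:ℝ) else 0, ?_, ?_, ?_, ?_⟩
    · intro θ s; beta_reduce; split_ifs <;> norm_num
    · intro θ; beta_reduce; simp
    · intro r c c'
      beta_reduce
      refine Finset.sum_nonneg fun θ _ => Finset.sum_nonneg fun s hs => ?_
      simp only [Finset.mem_filter] at hs
      rcases eq_or_ne s (fun r => b r θ) with h | h
      · have hbc : b r θ = c := by rw [← hs.2, h]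
        have hle : u r θ c' ≤ u r θ c := hbc ▸ hb r θ c'
        simp only [if_pos h]
        exact mul_nonneg (mul_nonneg (hμ θ).le (by norm_num)) (sub_nonneg.mpr hle)
      · simp [h]
    · intro r θ c h1c h2c
      beta_reduce
      refine Finset.sum_eq_zero fun s hs => ?_
      simp only [Finset.mem_filter] at hs
      rcases eq_or_ne s (fun r => b r θ) with h | h
      · exfalso
        have hbc : c = b r θ := by rw [← hs.2, h]
        exact h2c (hbc ▸ hb r θ)
      · simp [h]
  -- K is compact
  have hev : ∀ (θ : Θ) (s : R → C), Continuous (fun ψ : Θ → (R → C) → ℝ => ψ θ s) :=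
    fun θ s => (continuous_apply s).comp (continuous_apply θ)
  have hKcpt : IsCompact K := by
    have hbig : IsCompact (Set.univ.pi fun _ : Θ =>
        Set.univ.pi fun _ : (R → C) => Set.Icc (0:ℝ) 1) :=
      isCompact_univ_pi fun _ => isCompact_univ_pi fun _ => isCompact_Icc
    refine hbig.of_isClosed_subset ?_ ?_
    · have hrepr : K = (⋂ θ, ⋂ s, {ψ : Θ → (R → C) → ℝ | 0 ≤ ψ θ s}) ∩
          ((⋂ θ, {ψ : Θ → (R → C) → ℝ | ∑ s, ψ θ s = 1}) ∩
           ((⋂ r, ⋂ c, ⋂ c', {ψ : Θ → (R → C) → ℝ |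
              0 ≤ ∑ θ, ∑ s ∈ Finset.univ.filter (fun s : R → C => s r = c),
                μ θ * ψ θ s * (u r θ c - u r θ c')}) ∩
            (⋂ r, ⋂ θ, ⋂ c, {ψ : Θ → (R → C) → ℝ |
              c ≠ c₀ → ¬ (∀ c', u r θ c' ≤ u r θ c) →
              ∑ s ∈ Finset.univ.filter (fun s : R → C => s r = c), ψ θ s = 0}))) := by
        ext ψ
        simp only [hK, Set.mem_setOf_eq, Set.mem_inter_iff, Set.mem_iInter]
      rw [hrepr]
      refine IsClosed.inter ?_ (IsClosed.inter ?_ (IsClosed.inter ?_ ?_))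
      · exact isClosed_iInter fun θ => isClosed_iInter fun s =>
          isClosed_le continuous_const (hev θ s)
      · exact isClosed_iInter fun θ => isClosed_eq
          (continuous_finset_sum _ fun s _ => hev θ s) continuous_const
      · refine isClosed_iInter fun r => isClosed_iInter fun c => isClosed_iInter fun c' => ?_
        refine isClosed_le continuous_const ?_
        refine continuous_finset_sum _ fun θ _ => continuous_finset_sum _ fun s _ => ?_
        exact (continuous_const.mul (hev θ s)).mul continuous_const
      · refine isClosed_iInter fun r => isClosed_iInter fun θ => isClosed_iInter fun c => ?_
        by_cases h1 : c = c₀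
        · have : {ψ : Θ → (R → C) → ℝ | c ≠ c₀ → ¬ (∀ c', u r θ c' ≤ u r θ c) →
              ∑ s ∈ Finset.univ.filter (fun s : R → C => s r = c), ψ θ s = 0} = Set.univ := by
            ext ψ; simp [h1]
          rw [this]; exact isClosed_univ
        by_cases h2 : ∀ c', u r θ c' ≤ u r θ c
        · have : {ψ : Θ → (R → C) → ℝ | c ≠ c₀ → ¬ (∀ c', u r θ c' ≤ u r θ c) →
              ∑ s ∈ Finset.univ.filter (fun s : R → C => s r = c), ψ θ s = 0} = Set.univ := by
            ext ψ; simp [h2]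
          rw [this]; exact isClosed_univ
        · have : {ψ : Θ → (R → C) → ℝ | c ≠ c₀ → ¬ (∀ c', u r θ c' ≤ u r θ c) →
              ∑ s ∈ Finset.univ.filter (fun s : R → C => s r = c), ψ θ s = 0}
              = {ψ : Θ → (R → C) → ℝ |
                  ∑ s ∈ Finset.univ.filter (fun s : R → C => s r = c), ψ θ s = 0} := by
            ext ψ; simp [h1, h2]
          rw [this]
          exact isClosed_eq (continuous_finset_sum _ fun s _ => hev θ s) continuous_const
    · intro ψ hψ
      obtain ⟨hp0, hp1, -, -⟩ := hψ
      intro θ _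
      intro s _
      refine ⟨hp0 θ s, ?_⟩
      calc ψ θ s ≤ ∑ s', ψ θ s' :=
            Finset.single_le_sum (fun i _ => hp0 θ i) (Finset.mem_univ s)
        _ = 1 := hp1 θ
  -- continuity of the objective
  have hVcont : Continuous (fun ψ : Θ → (R → C) → ℝ => ∑ θ, ∑ s, μ θ * ψ θ s * f s) := by
    refine continuous_finset_sum _ fun θ _ => continuous_finset_sum _ fun s _ => ?_
    have hev : Continuous fun ψ : Θ → (R → C) → ℝ => ψ θ s :=
      (continuous_apply s).comp (continuous_apply θ)
    exact (continuous_const.mul hev).mul continuous_const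
  obtain ⟨φ, hφK, hmax⟩ := hKcpt.exists_isMaxOn hKne hVcont.continuousOn
  obtain ⟨hφ0, hφ1, hφ3, hφ4⟩ := hφK
  refine ⟨φ, hφ0, hφ1, hφ3, ?_, ?_⟩
  · intro φ' h0' h1' h3'
    obtain ⟨hTK, hTle⟩ := hTprop φ' h0' h1' h3'
    have h2 := hmax hTK
    simp only [Set.mem_setOf_eq] at h2
    calc (∑ θ, ∑ s, μ θ * φ' θ s * f s) ≤ ∑ θ, ∑ s, μ θ * T φ' θ s * f s := hTle
      _ ≤ ∑ θ, ∑ s, μ θ * φ θ s * f s := h2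
  · intro r θ c hpos
    by_contra hcon
    rcases not_or.mp hcon with ⟨h1, h2⟩
    rw [hφ4 r θ c h1 h2] at hpos
    exact lt_irrefl 0 hpos
end

section
/- Given a persuasive private signaling scheme φ' and a collection of persuasive marginal schemes {φ_r}_{r∈R} with φ_r(θ, c₀) ≥ φ'_r(θ, c₀) for all r and θ, there exists a persuasive private signaling scheme φ whose marginals are exactly {φ_r} and whose expected sender utility under a k-voting rule is at least that of φ'. -/
open Finset

/-- Sum over all functions of a product of per-coordinate weights, restricted to
functions taking value `c` at `r`, equals the weight at `(r,c)` when all rows sum to 1. -/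
lemma aux_marg {R C : Type*} [Fintype R] [Fintype C] [DecidableEq R] [DecidableEq C]
    (f : R → C → ℝ) (h1 : ∀ r, ∑ x, f r x = 1) (r : R) (c : C) :
    ∑ s ∈ Finset.univ.filter (fun s : R → C => s r = c), ∏ r', f r' (s r') = f r c := by
  classical
  have hstep : ∑ s ∈ Finset.univ.filter (fun s : R → C => s r = c), ∏ r', f r' (s r')
      = ∑ s : R → C, ∏ r',
          (if r' = r then (if s r' = c then f r (s r') else 0) else f r' (s r')) := by
    rw [Finset.sum_filter]
    refine Finset.sum_congr rfl fun s _ => ?_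
    by_cases hs : s r = c
    · rw [if_pos hs]
      refine Finset.prod_congr rfl fun r' _ => ?_
      by_cases h : r' = r
      · subst h; simp [hs]
      · simp [h]
    · rw [if_neg hs]
      symm
      apply Finset.prod_eq_zero (Finset.mem_univ r)
      simp [hs]
  rw [hstep, ← Fintype.prod_sum
    (fun (r' : R) (x : C) => if r' = r then (if x = c then f r x else 0) else f r' x)]
  have hrow : ∀ r', (∑ x, if r' = r then (if x = c then f r x else 0) else f r' x)
      = if r' = r then f r c else 1 := by
    intro r'
    by_cases h : r' = r
    · subst h; simp
    · simp [h, h1 r']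
  rw [Finset.prod_congr rfl fun r' _ => hrow r']
  simp

theorem stmt_9 {Θ R C : Type*} [Fintype Θ] [Fintype R] [Fintype C]
    [DecidableEq R] [DecidableEq C]
    (μ : Θ → ℝ) (hμ : ∀ θ, 0 < μ θ) (hμ1 : ∑ θ, μ θ = 1)
    (u : R → Θ → C → ℝ) (c₀ : C) (k : ℕ)
    (φ' : Θ → (R → C) → ℝ)
    (hφ'0 : ∀ θ s, 0 ≤ φ' θ s) (hφ'1 : ∀ θ, ∑ s, φ' θ s = 1)
    (hφ'pers : ∀ (r : R) (c c' : C),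
      0 ≤ ∑ θ, ∑ s ∈ Finset.univ.filter (fun s : R → C => s r = c),
        μ θ * φ' θ s * (u r θ c - u r θ c'))
    (φm : R → Θ → C → ℝ)
    (hφm0 : ∀ r θ c, 0 ≤ φm r θ c) (hφm1 : ∀ r θ, ∑ c, φm r θ c = 1)
    (hφmpers : ∀ (r : R) (c c' : C),
      0 ≤ ∑ θ, μ θ * φm r θ c * (u r θ c - u r θ c'))
    (hdom : ∀ (r : R) (θ : Θ),
      ∑ s ∈ Finset.univ.filter (fun s : R → C => s r = c₀), φ' θ s ≤ φm r θ c₀) :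
    ∃ φ : Θ → (R → C) → ℝ,
      (∀ θ s, 0 ≤ φ θ s) ∧ (∀ θ, ∑ s, φ θ s = 1) ∧
      (∀ (r : R) (θ : Θ) (c : C),
        ∑ s ∈ Finset.univ.filter (fun s : R → C => s r = c), φ θ s = φm r θ c) ∧
      (∀ (r : R) (c c' : C),
        0 ≤ ∑ θ, ∑ s ∈ Finset.univ.filter (fun s : R → C => s r = c),
          μ θ * φ θ s * (u r θ c - u r θ c')) ∧
      (∑ θ, ∑ s, μ θ * φ' θ s *
          (if k ≤ (Finset.univ.filter (fun r => s r = c₀)).card then (1 : ℝ) else 0)) ≤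
        ∑ θ, ∑ s, μ θ * φ θ s *
          (if k ≤ (Finset.univ.filter (fun r => s r = c₀)).card then (1 : ℝ) else 0) := by
  classical
  -- probability of recommending c₀ to receiver r under φ'
  set a : R → Θ → ℝ :=
    fun r θ => ∑ s ∈ Finset.univ.filter (fun s : R → C => s r = c₀), φ' θ s with ha
  have ha0 : ∀ r θ, 0 ≤ a r θ := fun r θ =>
    Finset.sum_nonneg fun s _ => hφ'0 θ s
  have ha1 : ∀ r θ, a r θ ≤ 1 := by
    intro r θ
    rw [ha]
    calc ∑ s ∈ Finset.univ.filter (fun s : R → C => s r = c₀), φ' θ s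
        ≤ ∑ s, φ' θ s :=
          Finset.sum_le_sum_of_subset_of_nonneg (Finset.filter_subset _ _)
            (fun s _ _ => hφ'0 θ s)
      _ = 1 := hφ'1 θ
  -- the "leftover" distribution
  set ν : R → Θ → C → ℝ := fun r θ c =>
    if a r θ < 1 then (φm r θ c - (if c = c₀ then a r θ else 0)) / (1 - a r θ)
    else (if c = c₀ then 1 else 0) with hν
  set q : R → Θ → C → C → ℝ := fun r θ c' c =>
    if c' = c₀ then (if c = c₀ then 1 else 0) else ν r θ c with hq
  -- degenerate case: a = 1 forces φm to be a point mass at c₀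
  have hdeg : ∀ r θ, a r θ = 1 → ∀ c, φm r θ c = (if c = c₀ then 1 else 0) := by
    intro r θ haθ c
    have h0 : φm r θ c₀ = 1 := by
      have h1 : (1 : ℝ) ≤ φm r θ c₀ := haθ ▸ hdom r θ
      have h2 : φm r θ c₀ ≤ 1 := by
        calc φm r θ c₀ ≤ ∑ c, φm r θ c :=
              Finset.single_le_sum (fun c _ => hφm0 r θ c) (Finset.mem_univ c₀)
          _ = 1 := hφm1 r θ
      linarith
    have hrest : ∑ c ∈ Finset.univ.erase c₀, φm r θ c = 0 := by
      have := hφm1 r θ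
      rw [← Finset.add_sum_erase _ _ (Finset.mem_univ c₀)] at this
      linarith
    by_cases hc : c = c₀
    · simp [hc, h0]
    · rw [if_neg hc]
      have := (Finset.sum_eq_zero_iff_of_nonneg
        (fun c _ => hφm0 r θ c)).mp hrest c (Finset.mem_erase.mpr ⟨hc, Finset.mem_univ c⟩)
      exact this
  have hq0 : ∀ r θ c' c, 0 ≤ q r θ c' c := by
    intro r θ c' c
    simp only [hq]
    by_cases h : c' = c₀
    · rw [if_pos h]
      split <;> norm_num
    · rw [if_neg h]
      simp only [hν]
      by_cases hlt : a r θ < 1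
      · rw [if_pos hlt]
        apply div_nonneg _ (by linarith)
        by_cases hc : c = c₀
        · rw [if_pos hc, hc]
          linarith [hdom r θ]
        · rw [if_neg hc]
          simpa using hφm0 r θ c
      · rw [if_neg hlt]
        split <;> norm_num
  have hq1 : ∀ r θ c', ∑ c, q r θ c' c = 1 := by
    intro r θ c'
    rw [hq]
    by_cases h : c' = c₀
    · simp [h]
    · simp only [if_neg h, hν]
      by_cases hlt : a r θ < 1
      · simp only [if_pos hlt]
        rw [← Finset.sum_div, Finset.sum_sub_distrib, hφm1]
        simp only [Finset.sum_ite_eq' Finset.univ c₀ (fun _ => a r θ), Finset.mem_univ,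
          if_pos]
        rw [div_self (by linarith)]
      · simp [hlt]
  -- support of q at c₀
  have hqsupp : ∀ r θ c, q r θ c₀ c ≠ 0 → c = c₀ := by
    intro r θ c h
    rw [hq] at h
    simp only [if_pos rfl] at h
    by_contra hc
    simp [hc] at h
  -- the one-receiver marginal identity
  have hmarg' : ∀ r θ c, ∑ s' : R → C, φ' θ s' * q r θ (s' r) c = φm r θ c := by
    intro r θ c
    have hsplit : ∑ s' : R → C, φ' θ s' * q r θ (s' r) c
        = (∑ s' ∈ Finset.univ.filter (fun s' : R → C => s' r = c₀),
            φ' θ s' * q r θ (s' r) c)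
          + ∑ s' ∈ Finset.univ.filter (fun s' : R → C => ¬ s' r = c₀),
            φ' θ s' * q r θ (s' r) c :=
      (Finset.sum_filter_add_sum_filter_not _ _ _).symm
    have h1 : ∑ s' ∈ Finset.univ.filter (fun s' : R → C => s' r = c₀),
        φ' θ s' * q r θ (s' r) c = a r θ * (if c = c₀ then 1 else 0) := by
      rw [ha, Finset.sum_mul]
      refine Finset.sum_congr rfl fun s' hs' => ?_
      have hs'r : s' r = c₀ := by simpa using (Finset.mem_filter.mp hs').2
      rw [hq]; simp [hs'r]
    have h2 : ∑ s' ∈ Finset.univ.filter (fun s' : R → C => ¬ s' r = c₀),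
        φ' θ s' * q r θ (s' r) c = (1 - a r θ) * ν r θ c := by
      have hb : ∑ s' ∈ Finset.univ.filter (fun s' : R → C => ¬ s' r = c₀), φ' θ s'
          = 1 - a r θ := by
        have := Finset.sum_filter_add_sum_filter_not Finset.univ
          (fun s' : R → C => s' r = c₀) (φ' θ)
        rw [hφ'1 θ] at this
        rw [ha]; linarith
      rw [← hb, Finset.sum_mul]
      refine Finset.sum_congr rfl fun s' hs' => ?_
      have hs'r : ¬ s' r = c₀ := by simpa using (Finset.mem_filter.mp hs').2
      rw [hq]; simp [hs'r]
    rw [hsplit, h1, h2]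
    by_cases hlt : a r θ < 1
    · have h1a : (1 : ℝ) - a r θ ≠ 0 := by linarith
      simp only [hν, if_pos hlt]
      rw [mul_comm ((1 : ℝ) - a r θ), div_mul_cancel₀ _ h1a]
      split_ifs <;> ring
    · have haθ : a r θ = 1 := le_antisymm (ha1 r θ) (not_lt.mp hlt)
      simp only [hν, haθ, if_neg (lt_irrefl (1 : ℝ)), hdeg r θ haθ c]
      ring
  -- the scheme
  set φ : Θ → (R → C) → ℝ :=
    fun θ s => ∑ s' : R → C, φ' θ s' * ∏ r, q r θ (s' r) (s r) with hφ
  have hφ0 : ∀ θ s, 0 ≤ φ θ s := by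
    intro θ s
    exact Finset.sum_nonneg fun s' _ => mul_nonneg (hφ'0 θ s')
      (Finset.prod_nonneg fun r _ => hq0 r θ (s' r) (s r))
  have hφmarg : ∀ (r : R) (θ : Θ) (c : C),
      ∑ s ∈ Finset.univ.filter (fun s : R → C => s r = c), φ θ s = φm r θ c := by
    intro r θ c
    simp only [hφ]
    rw [Finset.sum_comm]
    have hone : ∀ s' : R → C,
        ∑ s ∈ Finset.univ.filter (fun s : R → C => s r = c),
          φ' θ s' * ∏ r', q r' θ (s' r') (s r') = φ' θ s' * q r θ (s' r) c := by
      intro s'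
      rw [← Finset.mul_sum,
        aux_marg (fun r'' x => q r'' θ (s' r'') x) (fun r'' => hq1 r'' θ (s' r'')) r c]
    rw [Finset.sum_congr rfl fun s' _ => hone s', hmarg']
  refine ⟨φ, hφ0, ?_, hφmarg, ?_, ?_⟩
  · intro θ
    simp only [hφ]
    rw [Finset.sum_comm]
    have hone : ∀ s' : R → C,
        ∑ s : R → C, φ' θ s' * ∏ r, q r θ (s' r) (s r) = φ' θ s' := by
      intro s'
      rw [← Finset.mul_sum, ← Fintype.prod_sum fun r c => q r θ (s' r) c,
        Finset.prod_congr rfl fun r _ => hq1 r θ (s' r)]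
      simp
    rw [Finset.sum_congr rfl fun s' _ => hone s', hφ'1]
  · intro r c c'
    have hθ : ∀ θ : Θ, ∑ s ∈ Finset.univ.filter (fun s : R → C => s r = c),
        μ θ * φ θ s * (u r θ c - u r θ c') = μ θ * φm r θ c * (u r θ c - u r θ c') := by
      intro θ
      have : ∀ s : R → C, μ θ * φ θ s * (u r θ c - u r θ c')
          = φ θ s * (μ θ * (u r θ c - u r θ c')) := fun s => by ring
      rw [Finset.sum_congr rfl fun s _ => this s, ← Finset.sum_mul, hφmarg r θ c]
      ring
    rw [Finset.sum_congr rfl fun θ _ => hθ θ]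
    exact hφmpers r c c'
  · refine Finset.sum_le_sum fun θ _ => ?_
    set W : (R → C) → ℝ :=
      fun s => if k ≤ (Finset.univ.filter (fun r => s r = c₀)).card then (1 : ℝ) else 0
      with hW
    have hW0 : ∀ s, 0 ≤ W s := by
      intro s; rw [hW]; dsimp only; split <;> norm_num
    have hkey : ∀ s' : R → C, W s' ≤ ∑ s : R → C, (∏ r, q r θ (s' r) (s r)) * W s := by
      intro s'
      by_cases hk : k ≤ (Finset.univ.filter (fun r => s' r = c₀)).card
      · have hterm : ∀ s : R → C, (∏ r, q r θ (s' r) (s r)) * W s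
            = ∏ r, q r θ (s' r) (s r) := by
          intro s
          by_cases hp : (∏ r, q r θ (s' r) (s r)) = 0
          · rw [hp, zero_mul]
          · have hsub : (Finset.univ.filter fun r => s' r = c₀)
                ⊆ Finset.univ.filter fun r => s r = c₀ := by
              intro r hr
              have hr' : s' r = c₀ := by simpa using (Finset.mem_filter.mp hr).2
              have hne : q r θ (s' r) (s r) ≠ 0 :=
                Finset.prod_ne_zero_iff.mp hp r (Finset.mem_univ r)
              rw [hr'] at hne
              have : s r = c₀ := hqsupp r θ (s r) hne
              simp [this]
            have hk2 : k ≤ (Finset.univ.filter fun r => s r = c₀).card :=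
              le_trans hk (Finset.card_le_card hsub)
            rw [hW]; dsimp only; rw [if_pos hk2, mul_one]
        rw [Finset.sum_congr rfl fun s _ => hterm s,
          ← Fintype.prod_sum fun r c => q r θ (s' r) c,
          Finset.prod_congr rfl fun r _ => hq1 r θ (s' r)]
        rw [hW]; dsimp only; rw [if_pos hk]; simp
      · rw [hW]; dsimp only; rw [if_neg hk]
        exact Finset.sum_nonneg fun s _ => mul_nonneg
          (Finset.prod_nonneg fun r _ => hq0 r θ (s' r) (s r)) (hW0 s)
    have hRHS : ∑ s : R → C, μ θ * φ θ s * W s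
        = ∑ s' : R → C, μ θ * φ' θ s'
            * ∑ s : R → C, (∏ r, q r θ (s' r) (s r)) * W s := by
      calc ∑ s : R → C, μ θ * φ θ s * W s
          = ∑ s : R → C, ∑ s' : R → C,
              μ θ * φ' θ s' * ((∏ r, q r θ (s' r) (s r)) * W s) := by
            refine Finset.sum_congr rfl fun s _ => ?_
            simp only [hφ]
            rw [Finset.mul_sum, Finset.sum_mul]
            exact Finset.sum_congr rfl fun s' _ => by ring
        _ = ∑ s' : R → C, ∑ s : R → C,
              μ θ * φ' θ s' * ((∏ r, q r θ (s' r) (s r)) * W s) := Finset.sum_comm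
        _ = ∑ s' : R → C, μ θ * φ' θ s'
              * ∑ s : R → C, (∏ r, q r θ (s' r) (s r)) * W s := by
            exact Finset.sum_congr rfl fun s' _ => (Finset.mul_sum _ _ _).symm
    rw [hRHS]
    refine Finset.sum_le_sum fun s' _ => ?_
    have h0 : 0 ≤ μ θ * φ' θ s' := mul_nonneg (hμ θ).le (hφ'0 θ s')
    calc μ θ * φ' θ s' * W s' ≤ μ θ * φ' θ s'
          * ∑ s : R → C, (∏ r, q r θ (s' r) (s r)) * W s :=
        mul_le_mul_of_nonneg_left (hkey s') h0
end

section
/- Let x₁,…,xₙ ∈ [0,1] and define for each m ∈ {0,…,k−1} the quantity q_m as the sum of the n−m smallest values among x₁,…,xₙ. Then for any m < k, any coupling of Bernoulli random variables with success probabilities x₁,…,xₙ in which the event '≥ k successes' has probability β must satisfy β · (k − m) ≤ q_m. -/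
theorem stmt_11 (n k : ℕ) (x : Fin n → ℝ) (hx : ∀ i, 0 ≤ x i ∧ x i ≤ 1)
    (μ : (Fin n → Bool) → ℝ) (hμ0 : ∀ s, 0 ≤ μ s) (hμ1 : ∑ s, μ s = 1)
    (hmarg : ∀ r, ∑ s ∈ Finset.univ.filter (fun s => s r = true), μ s = x r)
    (β : ℝ)
    (hβ : β = ∑ s ∈ Finset.univ.filter
      (fun s : Fin n → Bool => k ≤ (Finset.univ.filter (fun r => s r = true)).card), μ s)
    (m : ℕ) (hm : m < k)
    (T : Finset (Fin n)) (hT : T.card = n - m) :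
    β * ((k : ℝ) - m) ≤ ∑ i ∈ T, x i := by
  subst hβ
  have key : ∀ s : Fin n → Bool,
      k ≤ (Finset.univ.filter (fun r => s r = true)).card →
      ((k : ℝ) - m) ≤ ((T.filter (fun i => s i = true)).card : ℝ) := by
    intro s hs
    have hsub : Finset.univ.filter (fun r => s r = true)
        ⊆ T.filter (fun i => s i = true) ∪ Tᶜ := by
      intro i hi
      by_cases h : i ∈ T
      · exact Finset.mem_union_left _ (Finset.mem_filter.2 ⟨h, (Finset.mem_filter.1 hi).2⟩)
      · exact Finset.mem_union_right _ (Finset.mem_compl.2 h)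
    have h1 : (Finset.univ.filter (fun r => s r = true)).card
        ≤ (T.filter (fun i => s i = true)).card + Tᶜ.card :=
      le_trans (Finset.card_le_card hsub) (Finset.card_union_le _ _)
    have h2 : Tᶜ.card = n - T.card := by
      simp [Finset.card_compl]
    have h3 : k ≤ (T.filter (fun i => s i = true)).card + m := by omega
    have := (Nat.cast_le (α := ℝ)).2 h3
    push_cast at this
    linarith
  have swap : ∑ i ∈ T, x i = ∑ s : Fin n → Bool,
      μ s * ((T.filter (fun i => s i = true)).card : ℝ) := by
    calc ∑ i ∈ T, x i
        = ∑ i ∈ T, ∑ s ∈ Finset.univ.filter (fun s : Fin n → Bool => s i = true), μ s := by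
          refine Finset.sum_congr rfl fun i _ => (hmarg i).symm
      _ = ∑ i ∈ T, ∑ s : Fin n → Bool, if s i = true then μ s else 0 := by
          simp [Finset.sum_filter]
      _ = ∑ s : Fin n → Bool, ∑ i ∈ T, if s i = true then μ s else 0 := Finset.sum_comm
      _ = ∑ s : Fin n → Bool, μ s * ((T.filter (fun i => s i = true)).card : ℝ) := by
          refine Finset.sum_congr rfl fun s _ => ?_
          rw [← Finset.sum_filter, Finset.sum_const, nsmul_eq_mul, mul_comm]
  rw [swap, Finset.sum_mul]
  calc ∑ s ∈ Finset.univ.filter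
        (fun s : Fin n → Bool => k ≤ (Finset.univ.filter (fun r => s r = true)).card),
        μ s * ((k : ℝ) - m)
      ≤ ∑ s ∈ Finset.univ.filter
        (fun s : Fin n → Bool => k ≤ (Finset.univ.filter (fun r => s r = true)).card),
        μ s * ((T.filter (fun i => s i = true)).card : ℝ) := by
        refine Finset.sum_le_sum fun s hs => ?_
        exact mul_le_mul_of_nonneg_left (key s (Finset.mem_filter.1 hs).2) (hμ0 s)
    _ ≤ ∑ s : Fin n → Bool, μ s * ((T.filter (fun i => s i = true)).card : ℝ) := by
        refine Finset.sum_le_sum_of_subset_of_nonneg (Finset.filter_subset _ _) fun s _ _ => ?_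
        exact mul_nonneg (hμ0 s) (Nat.cast_nonneg _)
end

section
/- In the MSI reduction, if receiver r_{e,j} votes c₀ upon public signal γ₀ for all e in some set ℰ* of size ≥ q and all j, then γ₀ is sent with equal probability p/q in exactly q states (those θ_e with e ∈ ℰ*) and probability 0 elsewhere, where p = ∑_{e'} φ(θ_{e'}, γ₀). -/
/-!
Rewriting the complement sum as `∑ φ - φ e`, the voting condition becomes `p / q ≤ φ e`.
If this holds on a set of at least `q` states, those states already carry total mass at least
`q · (p / q) = p`, the whole of `p`; as `p > 0` and `φ ≥ 0`, the set has exactly `q` elements,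
each carrying exactly `p / q`, and every other state carries nothing.
-/

open Finset

section
variable {ι : Type*} [Fintype ι]

theorem sub_mul_sum_erase_nonneg_iff [DecidableEq ι] {q : ℝ} (hq : 1 < q) (f : ι → ℝ) (e : ι) :
    0 ≤ f e - 1 / (q - 1) * ∑ e' ∈ univ.erase e, f e' ↔ (∑ e', f e') / q ≤ f e := by
  rw [sum_erase_eq_sub (mem_univ e), one_div, inv_mul_eq_div, sub_nonneg,
    div_le_iff₀ (by linarith), div_le_iff₀ (by linarith)]
  constructor <;> intro h <;> linarith

theorem card_eq_and_eq_of_le_of_sum_eq_mul {f : ι → ℝ} (hf : ∀ i, 0 ≤ f i) {a : ℝ} (ha : 0 < a)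
    {q : ℕ} (hsum : ∑ i, f i = q * a) {s : Finset ι} (hs : q ≤ #s) (hle : ∀ i ∈ s, a ≤ f i) :
    #s = q ∧ (∀ i ∈ s, f i = a) ∧ ∀ i ∉ s, f i = 0 := by
  have hlower : #s * a ≤ ∑ i ∈ s, f i := by simpa using card_nsmul_le_sum s f a hle
  have hupper : ∑ i ∈ s, f i ≤ ∑ i, f i := sum_le_univ_sum_of_nonneg hf
  have hcard : #s = q := by
    refine le_antisymm ?_ hs
    exact_mod_cast le_of_mul_le_mul_right (hlower.trans (hupper.trans hsum.le)) ha
  have hsum_s : ∑ i ∈ s, f i = q * a := by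
    rw [hcard] at hlower
    linarith
  refine ⟨hcard, fun i hi => ?_, fun i hi => ?_⟩
  · refine ((sum_eq_sum_iff_of_le hle).1 ?_ i hi).symm
    rw [sum_const, nsmul_eq_mul, hcard, hsum_s]
  · by_contra hne
    have hlt : ∑ j ∈ s, f j < ∑ j, f j :=
      sum_lt_sum_of_subset (subset_univ s) (mem_univ i) hi ((hf i).lt_of_ne' hne)
        fun j _ _ => hf j
    linarith
end

theorem stmt_13_general (n q : ℕ) (hq : 1 < q)
    (φ : Fin n → ℝ) (h0 : ∀ e, 0 ≤ φ e)
    (p : ℝ) (hp : p = ∑ e, φ e) (hppos : 0 < p)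
    (E : Finset (Fin n)) (hE : q ≤ E.card)
    (hvote : ∀ e ∈ E, 0 ≤ φ e - (1 / ((q : ℝ) - 1)) * ∑ e' ∈ Finset.univ.erase e, φ e') :
    E.card = q ∧ (∀ e ∈ E, φ e = p / q) ∧ ∀ e ∉ E, φ e = 0 := by
  have hq' : (1 : ℝ) < q := by exact_mod_cast hq
  have hsum : ∑ e, φ e = q * (p / q) := by
    rw [mul_div_cancel₀ _ (by positivity), hp]
  refine card_eq_and_eq_of_le_of_sum_eq_mul h0 (by positivity) hsum hE fun e he => ?_
  rw [hp]
  exact (sub_mul_sum_erase_nonneg_iff hq' φ e).1 (hvote e he)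

theorem stmt_13 (n q : ℕ) (hq : 1 < q)
    (φ : Fin n → ℝ) (h0 : ∀ e, 0 ≤ φ e) (h1 : ∀ e, φ e ≤ 1)
    (p : ℝ) (hp : p = ∑ e, φ e) (hppos : 0 < p)
    (E : Finset (Fin n)) (hE : q ≤ E.card)
    (hvote : ∀ e ∈ E, 0 ≤ φ e - (1 / ((q : ℝ) - 1)) * ∑ e' ∈ Finset.univ.erase e, φ e') :
    E.card = q ∧ (∀ e ∈ E, φ e = p / q) ∧ ∀ e ∉ E, φ e = 0 :=
  stmt_13_general n q hq φ h0 p hp hppos E hE hvote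
end
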